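/- arXiv:1405.5183 — 2 statements merged into one kernel-verified Lean document; each statement's English description precedes it below -/
import Mathlib

section
/- There exists a decreasing and continuous function φ : (0,1] → [0,1] such that for every α, β ∈ (0,1], if u_{α,β} denotes the unique fixed point of P_{B_3}^α ∘ P_{B_2}^α ∘ P_{B_1}^β, then P_{B_1}(u_{α,β}) = (φ(α), φ(α)²). In particular, P_{B_1}(u_{α,β}) does not depend on β. -/
/-!
The optimality condition of the projection onto the convex set `B₁` makes `u - P₁ u` a normal
vector to the epigraph of `t ↦ t²` at `P₁ u = (s, σ)`. As `P₂` and `P₃` are constant, the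
fixed-point equation is linear in `u` and `P₁ u`, and it expresses a multiple of `u - P₁ u` in
terms of `α`, `s`, `σ` alone, with `β` entering only through the scalar factor. The normal-cone
condition then forces `σ = s²` and `(2 - α) (2 s³ + s) = 1 - α`, and `t ↦ 2 t³ + t` is an
order isomorphism of `ℝ`.
-/

/-- `P` is the metric projection onto `A`: for every `x`, `P x` belongs to `A` and
is a point of `A` nearest to `x`. -/
def IsMetricProj {H : Type*} [NormedAddCommGroup H] (A : Set H) (P : H → H) : Prop :=
  ∀ x, P x ∈ A ∧ ∀ y ∈ A, dist x (P x) ≤ dist x y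

/-- The `α`-relaxed version of a map `P`: `x ↦ α • P x + (1 - α) • x`. -/
def relax {H : Type*} [AddCommGroup H] [Module ℝ H] (α : ℝ) (P : H → H) : H → H :=
  fun x => α • P x + (1 - α) • x

/-- The composition `T (k-1) ∘ ⋯ ∘ T 1 ∘ T 0` (so `T 0` is applied first). -/
def compFold {H : Type*} {k : ℕ} (T : Fin k → H → H) : H → H :=
  (List.ofFn T).foldl (fun g f => f ∘ g) id

open RealInnerProductSpace

theorem IsMetricProj.inner_sub_le_zero {H : Type*} [NormedAddCommGroup H] [InnerProductSpace ℝ H]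
    {A : Set H} {P : H → H} (hP : IsMetricProj A P) (hA : Convex ℝ A) (x : H) {y : H}
    (hy : y ∈ A) : ⟪x - P x, y - P x⟫ ≤ 0 := by
  obtain ⟨hPx, hmin⟩ := hP x
  have : Nonempty A := ⟨⟨y, hy⟩⟩
  refine (norm_eq_iInf_iff_real_inner_le_zero hA hPx).1 ?_ y hy
  have hbdd : BddBelow (Set.range fun w : A => ‖x - w‖) :=
    ⟨0, by rintro _ ⟨w, rfl⟩; exact norm_nonneg _⟩
  exact le_antisymm (le_ciInf fun w => by simpa only [dist_eq_norm] using hmin w w.2)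
    (ciInf_le hbdd ⟨P x, hPx⟩)

theorem convex_parabola_epigraph :
    Convex ℝ {p : EuclideanSpace ℝ (Fin 2) | p 0 ^ 2 ≤ p 1} := by
  intro x hx y hy a b ha hb hab
  simp only [Set.mem_ofPred_eq, PiLp.add_apply, PiLp.smul_apply, smul_eq_mul] at hx hy ⊢
  have hb' : b = 1 - a := by linarith
  subst hb'
  nlinarith [mul_nonneg (mul_nonneg ha hb) (sq_nonneg (x 0 - y 0))]

theorem normal_parabola_epigraph {p v : EuclideanSpace ℝ (Fin 2)} (hp : p 0 ^ 2 ≤ p 1)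
    (hv : ∀ y : EuclideanSpace ℝ (Fin 2), y 0 ^ 2 ≤ y 1 → ⟪v, y - p⟫ ≤ 0) :
    v 1 * (p 1 - p 0 ^ 2) = 0 ∧ v 0 = -2 * p 0 * v 1 := by
  have hcoord : ∀ y₀ y₁ : ℝ, y₀ ^ 2 ≤ y₁ → v 0 * (y₀ - p 0) + v 1 * (y₁ - p 1) ≤ 0 := by
    intro y₀ y₁ hy
    have := hv !₂[y₀, y₁] (by simpa using hy)
    simpa [PiLp.inner_apply, Fin.sum_univ_two, mul_comm] using this
  have hv₁ : v 1 ≤ 0 := by nlinarith [hcoord (p 0) (p 1 + 1) (by linarith)]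
  have hvert : v 1 * (p 1 - p 0 ^ 2) = 0 := by
    nlinarith [hcoord (p 0) (p 0 ^ 2) le_rfl, mul_nonneg (neg_nonneg.2 hv₁) (sub_nonneg.2 hp)]
  refine ⟨hvert, ?_⟩
  -- Along the boundary curve `t ↦ (p₀ + t, (p₀ + t)²)` the inequality is a quadratic in `t`.
  have hdisc := discrim_le_zero (a := -v 1) (b := -(v 0 + 2 * p 0 * v 1)) (c := 0) fun t => by
    nlinarith [hcoord (p 0 + t) ((p 0 + t) ^ 2) le_rfl]
  rw [discrim] at hdisc
  nlinarith [sq_nonneg (v 0 + 2 * p 0 * v 1)]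

theorem strictMono_cubic : StrictMono fun t : ℝ => 2 * t ^ 3 + t :=
  ((Odd.strictMono_pow (by decide)).const_mul two_pos).add strictMono_id

theorem surjective_cubic : Function.Surjective fun t : ℝ => 2 * t ^ 3 + t := by
  refine Continuous.surjective (by fun_prop) ?_ ?_
  · refine Filter.tendsto_atTop_mono' _ ?_ Filter.tendsto_id
    filter_upwards [Filter.eventually_ge_atTop 0] with t ht
    have := pow_nonneg ht 3
    simp only [id]
    linarith
  · refine Filter.tendsto_atBot_mono' _ ?_ Filter.tendsto_id
    filter_upwards [Filter.eventually_le_atBot 0] with t ht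
    simp only [id]
    nlinarith [sq_nonneg t, mul_nonpos_of_nonneg_of_nonpos (sq_nonneg t) ht]

noncomputable def cubicIso : ℝ ≃o ℝ :=
  strictMono_cubic.orderIsoOfSurjective _ surjective_cubic

theorem cubicIso_apply (t : ℝ) : cubicIso t = 2 * t ^ 3 + t := rfl

/-- `φ(α)` of the statement: the real root `s` of `(2 - α) (2 s³ + s) = 1 - α`. -/
noncomputable def footAbscissa (α : ℝ) : ℝ := cubicIso.symm ((1 - α) / (2 - α))

theorem footAbscissa_eq_of_cubic {α s : ℝ} (hα : α ≠ 2) (h : (2 - α) * (2 * s ^ 3 + s) = 1 - α) :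
    footAbscissa α = s := by
  rw [footAbscissa, OrderIso.symm_apply_eq, cubicIso_apply, div_eq_iff (sub_ne_zero.2 hα.symm)]
  linear_combination -h

theorem strictAntiOn_footAbscissa : StrictAntiOn footAbscissa (Set.Iio 2) := by
  intro a ha b hb hab
  apply cubicIso.symm.strictMono
  rw [div_lt_div_iff₀ (sub_pos.2 hb) (sub_pos.2 ha)]
  nlinarith

theorem continuousOn_footAbscissa : ContinuousOn footAbscissa (Set.Iio 2) :=
  cubicIso.symm.continuous.comp_continuousOn <|
    ContinuousOn.div (by fun_prop) (by fun_prop) fun α hα => (sub_pos.2 hα).ne'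

theorem footAbscissa_mem_Icc {α : ℝ} (hα : α ∈ Set.Icc (0 : ℝ) 1) :
    footAbscissa α ∈ Set.Icc (0 : ℝ) 1 := by
  obtain ⟨h₀, h₁⟩ := hα
  have hr₀ : 0 ≤ (1 - α) / (2 - α) := div_nonneg (by linarith) (by linarith)
  have hr₁ : (1 - α) / (2 - α) ≤ 1 := (div_le_one (by linarith)).2 (by linarith)
  constructor
  · simpa [footAbscissa, OrderIso.le_symm_apply, cubicIso_apply] using hr₀
  · rw [footAbscissa, OrderIso.symm_apply_le, cubicIso_apply]
    linarith

theorem foot_of_relaxed_fixed_point {α β s σ u₀ u₁ : ℝ} (hα₀ : 0 < α) (hα₂ : α < 2)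
    (hp : s ^ 2 ≤ σ) (h₀ : (1 - α) * (α + (1 - α) * (β * s + (1 - β) * u₀)) = u₀)
    (h₁ : (1 - α) * ((1 - α) * (β * σ + (1 - β) * u₁)) = u₁)
    (hvert : (u₁ - σ) * (σ - s ^ 2) = 0) (hslope : u₀ - s = -2 * s * (u₁ - σ)) :
    σ = s ^ 2 ∧ (2 - α) * (2 * s ^ 3 + s) = 1 - α := by
  -- With `D = 1 - (1 - α)²(1 - β)` and `c = α(2 - α)`, the fixed-point equations say
  -- `D (u₀ - s, u₁ - σ) = (α(1 - α) - c s, -c σ)`.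
  have hc : 0 < α * (2 - α) := mul_pos hα₀ (sub_pos.2 hα₂)
  have hD₁ : (1 - (1 - α) ^ 2 * (1 - β)) * (u₁ - σ) = -(α * (2 - α) * σ) := by
    linear_combination -h₁
  have hσ : σ * (σ - s ^ 2) = 0 := by
    have : α * (2 - α) * (σ * (σ - s ^ 2)) = 0 := by
      linear_combination (σ - s ^ 2) * hD₁ - (1 - (1 - α) ^ 2 * (1 - β)) * hvert
    simpa [hc.ne'] using this
  have hσs : σ = s ^ 2 := by
    rcases mul_eq_zero.1 hσ with h | h
    · nlinarith [sq_nonneg s]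
    · linarith
  refine ⟨hσs, mul_left_cancel₀ hα₀.ne' ?_⟩
  subst hσs
  linear_combination (-(1 - (1 - α) ^ 2 * (1 - β))) * hslope - h₀ + 2 * s * hD₁

theorem stmt_5
    (B₁ B₂ B₃ : Set (EuclideanSpace ℝ (Fin 2)))
    (hB₁ : B₁ = {p | (p 0) ^ 2 ≤ p 1})
    (hB₂ : B₂ = {p | p 0 = 1 ∧ p 1 = 0})
    (hB₃ : B₃ = {p | p 0 = 0 ∧ p 1 = 0})
    (P₁ P₂ P₃ : EuclideanSpace ℝ (Fin 2) → EuclideanSpace ℝ (Fin 2))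
    (hP₁ : IsMetricProj B₁ P₁) (hP₂ : IsMetricProj B₂ P₂) (hP₃ : IsMetricProj B₃ P₃) :
    ∃ φ : ℝ → ℝ, StrictAntiOn φ (Set.Ioc 0 1) ∧ ContinuousOn φ (Set.Ioc 0 1) ∧
      (∀ α ∈ Set.Ioc (0 : ℝ) 1, φ α ∈ Set.Icc (0 : ℝ) 1) ∧
      ∀ α ∈ Set.Ioc (0 : ℝ) 1, ∀ β ∈ Set.Ioc (0 : ℝ) 1,
        ∀ u : EuclideanSpace ℝ (Fin 2), relax α P₃ (relax α P₂ (relax β P₁ u)) = u →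
          P₁ u 0 = φ α ∧ P₁ u 1 = (φ α) ^ 2 := by
  have hIoc : Set.Ioc (0 : ℝ) 1 ⊆ Set.Iio 2 := fun α hα => lt_of_le_of_lt hα.2 one_lt_two
  refine ⟨footAbscissa, strictAntiOn_footAbscissa.mono hIoc, continuousOn_footAbscissa.mono hIoc,
    fun α hα => footAbscissa_mem_Icc (Set.Ioc_subset_Icc_self hα), ?_⟩
  intro α hα β _ u hu
  subst hB₁ hB₂ hB₃
  have hp := (hP₁ u).1
  obtain ⟨hvert, hslope⟩ := normal_parabola_epigraph hp fun y hy =>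
    hP₁.inner_sub_le_zero convex_parabola_epigraph u hy
  obtain ⟨hq₀, hq₁⟩ := (hP₂ (relax β P₁ u)).1
  obtain ⟨hr₀, hr₁⟩ := (hP₃ (relax α P₂ (relax β P₁ u))).1
  have h₀ := congrArg (· 0) hu
  have h₁ := congrArg (· 1) hu
  simp only [relax, PiLp.add_apply, PiLp.smul_apply, smul_eq_mul] at h₀ h₁ hq₀ hq₁ hr₀ hr₁
  rw [hq₀, hr₀] at h₀
  rw [hq₁, hr₁] at h₁
  simp only [mul_zero, zero_add, mul_one] at h₀ h₁
  simp only [PiLp.sub_apply] at hvert hslope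
  obtain ⟨hσ, hs⟩ := foot_of_relaxed_fixed_point hα.1 (hIoc hα) hp h₀ h₁ hvert hslope
  rw [footAbscissa_eq_of_cubic (hIoc hα).ne hs]
  exact ⟨rfl, hσ⟩
end

section
/- Let H be a finite-dimensional real Hilbert space and let A_1, …, A_k be nonempty, convex, closed subsets of H. If the composition P_{A_k} ∘ P_{A_{k−1}} ∘ ⋯ ∘ P_{A_1} has a fixed point, then for every x ∈ H the sequence of iterates ((P_{A_k} ∘ P_{A_{k−1}} ∘ ⋯ ∘ P_{A_1})^n x)_{n ∈ ℕ} converges. -/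
open Filter Topology Function
open scoped InnerProductSpace

/-- `T` is `α`-averaged exactly when this holds with `c = (1 - α) / α`; `c = 1` is firm
nonexpansiveness. -/
def IsAveraged {E : Type*} [NormedAddCommGroup E] (c : ℝ) (T : E → E) : Prop :=
  ∀ x y : E, ‖T x - T y‖ ^ 2 + c * ‖(x - T x) - (y - T y)‖ ^ 2 ≤ ‖x - y‖ ^ 2

section Fejer

variable {X : Type*} [PseudoMetricSpace X]

theorem antitone_dist_iterate_of_isFixedPt {T : X → X} (hT : LipschitzWith 1 T) {q : X}
    (hq : IsFixedPt T q) (x : X) : Antitone fun n => dist (T^[n] x) q :=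
  antitone_nat_of_succ_le fun n => by
    simpa only [iterate_succ_apply', hq.eq, NNReal.coe_one, one_mul] using
      hT.dist_le_mul (T^[n] x) q

theorem tendsto_of_antitone_dist_of_tendsto_subseq {u : ℕ → X} {L : X}
    (hanti : Antitone fun n => dist (u n) L) {φ : ℕ → ℕ} (hφ : StrictMono φ)
    (hsub : Tendsto (u ∘ φ) atTop (𝓝 L)) : Tendsto u atTop (𝓝 L) := by
  rw [tendsto_iff_dist_tendsto_zero] at hsub ⊢
  exact (tendsto_iff_tendsto_subseq_of_antitone hanti hφ.tendsto_atTop).2 hsub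

end Fejer

section NormedGroup

variable {E : Type*} [NormedAddCommGroup E]

theorem isFixedPt_of_tendsto_iterate_subseq {T : E → E} (hT : Continuous T) {x L : E}
    (hreg : Tendsto (fun n => T^[n + 1] x - T^[n] x) atTop (𝓝 0)) {φ : ℕ → ℕ}
    (hφ : StrictMono φ) (hsub : Tendsto (fun n => T^[φ n] x) atTop (𝓝 L)) :
    IsFixedPt T L := by
  have hTL : Tendsto (fun n => T (T^[φ n] x)) atTop (𝓝 (T L)) := (hT.tendsto L).comp hsub
  have hL : Tendsto (fun n => T (T^[φ n] x)) atTop (𝓝 (L + 0)) := by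
    refine (hsub.add (hreg.comp hφ.tendsto_atTop)).congr fun n => ?_
    simp only [comp_apply, iterate_succ_apply', add_sub_cancel]
  rw [add_zero] at hL
  exact tendsto_nhds_unique hTL hL

theorem isAveraged_id (c : ℝ) : IsAveraged c (id : E → E) := by
  intro x y
  simp

theorem IsAveraged.comp {c₁ c₂ : ℝ} (hc₁ : 0 ≤ c₁) (hc₂ : 0 ≤ c₂) {T₁ T₂ : E → E}
    (h₁ : IsAveraged c₁ T₁) (h₂ : IsAveraged c₂ T₂) :
    IsAveraged (min c₁ c₂ / 2) (T₂ ∘ T₁) := by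
  intro x y
  set a := (x - T₁ x) - (y - T₁ y)
  set b := (T₁ x - T₂ (T₁ x)) - (T₁ y - T₂ (T₁ y))
  have hab : (x - T₂ (T₁ x)) - (y - T₂ (T₁ y)) = a + b := by simp only [a, b]; abel
  have hsum : ‖a + b‖ ^ 2 ≤ 2 * ‖a‖ ^ 2 + 2 * ‖b‖ ^ 2 := by
    nlinarith [norm_add_le a b, norm_nonneg (a + b), sq_nonneg (‖a‖ - ‖b‖)]
  have hm : min c₁ c₂ * (‖a‖ ^ 2 + ‖b‖ ^ 2) ≤ c₁ * ‖a‖ ^ 2 + c₂ * ‖b‖ ^ 2 := by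
    nlinarith [min_le_left c₁ c₂, min_le_right c₁ c₂, sq_nonneg ‖a‖, sq_nonneg ‖b‖]
  have hm₀ : 0 ≤ min c₁ c₂ := le_min hc₁ hc₂
  simp only [comp_apply, hab]
  nlinarith [h₁ x y, h₂ (T₁ x) (T₁ y)]

theorem exists_isAveraged_foldl_comp (l : List (E → E)) (hl : ∀ f ∈ l, ∃ c > 0, IsAveraged c f)
    {g : E → E} (hg : ∃ c > 0, IsAveraged c g) :
    ∃ c > 0, IsAveraged c (l.foldl (fun g f => f ∘ g) g) := by
  induction l generalizing g with
  | nil => exact hg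
  | cons f l ih =>
    obtain ⟨c₁, hc₁, hg⟩ := hg
    obtain ⟨c₂, hc₂, hf⟩ := hl f List.mem_cons_self
    exact ih (fun f' hf' => hl f' (List.mem_cons_of_mem _ hf'))
      ⟨min c₁ c₂ / 2, by positivity, hg.comp hc₁.le hc₂.le hf⟩

theorem exists_isAveraged_compFold {k : ℕ} (T : Fin k → E → E)
    (hT : ∀ i, ∃ c > 0, IsAveraged c (T i)) : ∃ c > 0, IsAveraged c (compFold T) :=
  exists_isAveraged_foldl_comp _ (by simpa only [List.forall_mem_ofFn_iff] using hT)
    ⟨1, one_pos, isAveraged_id 1⟩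

variable {c : ℝ} {T : E → E}

theorem IsAveraged.lipschitzWith_one (hT : IsAveraged c T) (hc : 0 ≤ c) : LipschitzWith 1 T :=
  LipschitzWith.of_dist_le_mul fun x y => by
    rw [dist_eq_norm, dist_eq_norm, NNReal.coe_one, one_mul,
      ← pow_le_pow_iff_left₀ (norm_nonneg _) (norm_nonneg _) two_ne_zero]
    nlinarith [hT x y, sq_nonneg ‖(x - T x) - (y - T y)‖]

theorem IsAveraged.tendsto_iterate_succ_sub (hT : IsAveraged c T) (hc : 0 < c) {p : E}
    (hp : IsFixedPt T p) (x : E) :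
    Tendsto (fun n => T^[n + 1] x - T^[n] x) atTop (𝓝 0) := by
  set u : ℕ → E := fun n => T^[n] x
  set a : ℕ → ℝ := fun n => ‖u n - p‖ ^ 2
  have hdecr : ∀ n, ‖u (n + 1) - u n‖ ^ 2 ≤ (a n - a (n + 1)) / c := by
    intro n
    have hstep : u (n + 1) = T (u n) := iterate_succ_apply' T n x
    have h := hT (u n) p
    rw [hp.eq, sub_self, sub_zero, ← hstep, norm_sub_rev (u n)] at h
    rw [le_div_iff₀ hc]
    linarith
  have ha : Antitone a := by
    intro m n hmn
    have := antitone_dist_iterate_of_isFixedPt (hT.lipschitzWith_one hc.le) hp x hmn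
    simp only [dist_eq_norm] at this
    exact pow_le_pow_left₀ (norm_nonneg _) this 2
  have hlim : Tendsto a atTop (𝓝 (⨅ n, a n)) :=
    tendsto_atTop_ciInf ha ⟨0, by rintro _ ⟨n, rfl⟩; positivity⟩
  have hgap : Tendsto (fun n => (a n - a (n + 1)) / c) atTop (𝓝 0) := by
    simpa using (hlim.sub (hlim.comp (tendsto_add_atTop_nat 1))).div_const c
  have hsq : Tendsto (fun n => ‖u (n + 1) - u n‖ ^ 2) atTop (𝓝 0) :=
    squeeze_zero (fun n => by positivity) hdecr hgap
  rw [tendsto_zero_iff_norm_tendsto_zero]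
  simpa only [Real.sqrt_zero, Real.sqrt_sq (norm_nonneg _)] using hsq.sqrt

theorem IsAveraged.exists_tendsto_iterate [ProperSpace E] (hT : IsAveraged c T) (hc : 0 < c)
    {p : E} (hp : IsFixedPt T p) (x : E) :
    ∃ L : E, Tendsto (fun n => T^[n] x) atTop (𝓝 L) := by
  have hlip := hT.lipschitzWith_one hc.le
  obtain ⟨L, -, φ, hφ, hsub⟩ := (isCompact_closedBall p (dist x p)).tendsto_subseq
    fun n => (antitone_dist_iterate_of_isFixedPt hlip hp x) n.zero_le
  have hL : IsFixedPt T L := isFixedPt_of_tendsto_iterate_subseq hlip.continuous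
    (hT.tendsto_iterate_succ_sub hc hp x) hφ hsub
  exact ⟨L, tendsto_of_antitone_dist_of_tendsto_subseq
    (antitone_dist_iterate_of_isFixedPt hlip hL x) hφ hsub⟩

end NormedGroup

section InnerProduct

variable {H : Type*} [NormedAddCommGroup H] [InnerProductSpace ℝ H]

theorem IsMetricProj.inner_sub_nonpos {A : Set H} {P : H → H} (hconv : Convex ℝ A)
    (hP : IsMetricProj A P) (x : H) : ∀ w ∈ A, ⟪x - P x, w - P x⟫_ℝ ≤ 0 := by
  refine (norm_eq_iInf_iff_real_inner_le_zero hconv (hP x).1).1 ?_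
  have : Nonempty A := ⟨⟨P x, (hP x).1⟩⟩
  have hbdd : BddBelow (Set.range fun w : A => ‖x - w‖) :=
    ⟨0, by rintro _ ⟨w, rfl⟩; exact norm_nonneg _⟩
  refine le_antisymm (le_ciInf fun w => ?_) (ciInf_le hbdd ⟨P x, (hP x).1⟩)
  simpa only [dist_eq_norm] using (hP x).2 w w.2

theorem IsMetricProj.isAveraged_one {A : Set H} {P : H → H} (hconv : Convex ℝ A)
    (hP : IsMetricProj A P) : IsAveraged 1 P := by
  intro x y
  set d := P x - P y
  set r := (x - P x) - (y - P y)
  have hx := hP.inner_sub_nonpos hconv x (P y) (hP y).1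
  have hy := hP.inner_sub_nonpos hconv y (P x) (hP x).1
  have hdr : 0 ≤ ⟪d, r⟫_ℝ := by
    rw [← neg_sub (P x) (P y), inner_neg_right] at hx
    rw [real_inner_comm, inner_sub_left]
    linarith
  calc ‖d‖ ^ 2 + 1 * ‖r‖ ^ 2 ≤ ‖d‖ ^ 2 + 2 * ⟪d, r⟫_ℝ + ‖r‖ ^ 2 := by linarith
    _ = ‖d + r‖ ^ 2 := (norm_add_sq_real d r).symm
    _ = ‖x - y‖ ^ 2 := by congr 2; simp only [d, r]; abel

end InnerProduct

theorem stmt_19_general {H : Type*} [NormedAddCommGroup H] [InnerProductSpace ℝ H]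
    [FiniteDimensional ℝ H]
    (k : ℕ) (A : Fin k → Set H)
    (hA : ∀ i, (A i).Nonempty ∧ Convex ℝ (A i) ∧ IsClosed (A i))
    (P : Fin k → H → H) (hP : ∀ i, IsMetricProj (A i) (P i))
    (hfix : ∃ x, compFold P x = x) :
    ∀ x : H, ∃ L : H,
      Filter.Tendsto (fun n => (compFold P)^[n] x) Filter.atTop (nhds L) := by
  intro x
  obtain ⟨p, hp⟩ := hfix
  obtain ⟨c, hc, hT⟩ := exists_isAveraged_compFold P fun i =>
    ⟨1, one_pos, (hP i).isAveraged_one (hA i).2.1⟩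
  exact hT.exists_tendsto_iterate hc hp x

theorem stmt_19 {H : Type*} [NormedAddCommGroup H] [InnerProductSpace ℝ H]
    [FiniteDimensional ℝ H]
    (k : ℕ) (hk : 1 ≤ k) (A : Fin k → Set H)
    (hA : ∀ i, (A i).Nonempty ∧ Convex ℝ (A i) ∧ IsClosed (A i))
    (P : Fin k → H → H) (hP : ∀ i, IsMetricProj (A i) (P i))
    (hfix : ∃ x, compFold P x = x) :
    ∀ x : H, ∃ L : H,
      Filter.Tendsto (fun n => (compFold P)^[n] x) Filter.atTop (nhds L) :=
  stmt_19_general k A hA P hP hfix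
end
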